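/- arXiv:1405.5758 — 2 statements merged into one kernel-verified Lean document; each statement's English description precedes it below -/
import Mathlib

section
/- Let V_h be a finite-dimensional real vector space with norms ‖·‖ (L²-norm), |||·|||_h, and a subspace V_H with norm |||·|||_H. Let I_H : V_h → V_H be linear with: ‖v − I_H(v)‖ ≤ C H |||v|||_h for all v ∈ V_h, I_H ∘ (I_H|_{V_H})^{-1} ∘ I_H = I_H, |||(I_H|_{V_H})^{-1}(v_H)|||_H ≤ C |||v_H|||_H and ‖I_H(v_H)‖ ≤ C |||v_H|||_H for v_H ∈ V_H, |||I_H(v)|||_H ≤ C |||v|||_h for v ∈ V_h, and ‖v_H − I_H(v_H)‖ ≤ C H |||v_H|||_H for v_H ∈ V_H. Then for every decomposition v^{ms} = v_H + v^f with v_H ∈ V_H and v^f ∈ ker(I_H), there holds ‖v^f‖ ≤ C' H |||v^{ms}|||_h for a constant C' depending only on C. -/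
/-!
Write `v = vH + vf`. Since `IH vf = 0`, `IH v = IH vH`, so
`vf = (v - IH v) - (vH - IH vH)`, and both differences are interpolation errors: the first is
bounded by `C H |||v|||_h`, the second by `C H |||vH|||_H`. Because `vH = J (IH v)`, the stability
of `J` and of `IH` gives `|||vH|||_H ≤ C² |||v|||_h`, whence `C' = C + C³`.
-/

theorem sub_le_add_of_subadditive {V : Type*} [AddGroup V] (N : V → ℝ)
    (hNtri : ∀ v w : V, N (v + w) ≤ N v + N w) (hNneg : ∀ v : V, N (-v) = N v) (v w : V) :
    N (v - w) ≤ N v + N w := by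
  simpa [sub_eq_add_neg, hNneg] using hNtri v (-w)

theorem eq_sub_sub_of_apply_eq_zero {R V : Type*} [Semiring R] [AddCommGroup V] [Module R V]
    (f : V →ₗ[R] V) (u : V) {w : V} (hw : f w = 0) :
    w = (u + w - f (u + w)) - (u - f u) := by
  rw [map_add, hw]
  abel

theorem coarse_le_mul_mul_of_leftInverse {V : Type*} [AddCommGroup V] [Module ℝ V]
    (VH : Submodule ℝ V) (Nh NH : V → ℝ) (C : ℝ) (hC : 0 ≤ C) (IH J : V →ₗ[ℝ] V)
    (hrange : ∀ v, IH v ∈ VH) (hJleft : ∀ v ∈ VH, J (IH v) = v)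
    (hJ : ∀ v ∈ VH, NH (J v) ≤ C * NH v) (hIH : ∀ v : V, NH (IH v) ≤ C * Nh v)
    {vH : V} (hvH : vH ∈ VH) {vf : V} (hvf : IH vf = 0) :
    NH vH ≤ C * (C * Nh (vH + vf)) := by
  have hvH_eq : vH = J (IH (vH + vf)) := by
    rw [map_add, hvf, add_zero, hJleft vH hvH]
  calc NH vH = NH (J (IH (vH + vf))) := congrArg NH hvH_eq
    _ ≤ C * NH (IH (vH + vf)) := hJ _ (hrange _)
    _ ≤ C * (C * Nh (vH + vf)) := mul_le_mul_of_nonneg_left (hIH _) hC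

theorem stmt4_general {V : Type*} [AddCommGroup V] [Module ℝ V]
    (VH : Submodule ℝ V)
    (N Nh NH : V → ℝ) (H : ℝ) (hH : 0 < H)
    (C : ℝ) (hC : 0 < C)
    (hNtri : ∀ v w : V, N (v + w) ≤ N v + N w)
    (hNneg : ∀ v : V, N (-v) = N v)
    (IH : V →ₗ[ℝ] V) (hrange : ∀ v, IH v ∈ VH)
    (J : V →ₗ[ℝ] V)
    (hJleft : ∀ v ∈ VH, J (IH v) = v)
    (h1 : ∀ v : V, N (v - IH v) ≤ C * H * Nh v)
    (h3 : ∀ v ∈ VH, NH (J v) ≤ C * NH v)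
    (h5 : ∀ v : V, NH (IH v) ≤ C * Nh v)
    (h6 : ∀ v ∈ VH, N (v - IH v) ≤ C * H * NH v) :
    ∃ C' : ℝ, 0 < C' ∧
      ∀ vH ∈ VH, ∀ vf : V, IH vf = 0 →
        N vf ≤ C' * H * Nh (vH + vf) := by
  refine ⟨C + C ^ 3, by positivity, fun vH hvH vf hvf => ?_⟩
  have hcoarse := coarse_le_mul_mul_of_leftInverse VH Nh NH C hC.le IH J hrange hJleft h3 h5 hvH hvf
  calc N vf = N ((vH + vf - IH (vH + vf)) - (vH - IH vH)) :=
        congrArg N (eq_sub_sub_of_apply_eq_zero IH vH hvf)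
    _ ≤ N (vH + vf - IH (vH + vf)) + N (vH - IH vH) :=
        sub_le_add_of_subadditive N hNtri hNneg _ _
    _ ≤ C * H * Nh (vH + vf) + C * H * NH vH := add_le_add (h1 _) (h6 vH hvH)
    _ ≤ C * H * Nh (vH + vf) + C * H * (C * (C * Nh (vH + vf))) := by gcongr
    _ = (C + C ^ 3) * H * Nh (vH + vf) := by ring

theorem stmt4 {V : Type*} [AddCommGroup V] [Module ℝ V] [Module.Finite ℝ V]
    (VH : Submodule ℝ V)
    (N Nh NH : V → ℝ) (H : ℝ) (hH : 0 < H)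
    (C : ℝ) (hC : 0 < C)
    (hNtri : ∀ v w : V, N (v + w) ≤ N v + N w)
    (hNneg : ∀ v : V, N (-v) = N v)
    (IH : V →ₗ[ℝ] V) (hrange : ∀ v, IH v ∈ VH)
    (J : V →ₗ[ℝ] V)
    (hJmem : ∀ v ∈ VH, J v ∈ VH)
    (hJleft : ∀ v ∈ VH, J (IH v) = v)
    (hJright : ∀ v ∈ VH, IH (J v) = v)
    (h1 : ∀ v : V, N (v - IH v) ≤ C * H * Nh v)
    (h2 : ∀ v : V, IH (J (IH v)) = IH v)
    (h3 : ∀ v ∈ VH, NH (J v) ≤ C * NH v)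
    (h4 : ∀ v ∈ VH, N (IH v) ≤ C * NH v)
    (h5 : ∀ v : V, NH (IH v) ≤ C * Nh v)
    (h6 : ∀ v ∈ VH, N (v - IH v) ≤ C * H * NH v) :
    ∃ C' : ℝ, 0 < C' ∧
      ∀ vH ∈ VH, ∀ vf : V, IH vf = 0 →
        N vf ≤ C' * H * Nh (vH + vf) :=
  stmt4_general VH N Nh NH H hH C hC hNtri hNneg IH hrange J hJleft h1 h3 h5 h6
end

section
/- Let a_h be a symmetric coercive bounded bilinear form on a finite-dimensional real space V with α|||v|||² ≤ a_h(v,v) and a_h(u,v) ≤ β|||u||||||v|||. Suppose Φ^{ms} = Φ_H + Q(Φ_H), and there are constants C, m, and H ∈ (0,1) with: (i) |||Φ_H||| ≤ C H^{(1−m)/2} |||Φ_H|||_H where |||Φ_H|||_H ≤ C |||Φ^{ms}|||; (ii) |a_h(Φ^{ms}, Q(Φ_H))| ≤ C H^{n−1} (1 + H^{(1−m)/2}) |||Φ^{ms}|||² with n = (m+3)/2. Then a_h(Φ^{ms}, Φ_H) ≥ (α − C' H) |||Φ^{ms}|||² for a constant C' independent of H, and hence, dividing by |||Φ_H|||_H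 ≤ C|||Φ^{ms}|||, the inf-sup bound a_h(Φ^{ms}, Φ_H)/(|||Φ^{ms}||| |||Φ_H|||_H) ≥ C₁(α − C₂ H) holds. -/
/-!
Coercivity gives `a(Φᵐˢ, Φᵐˢ) ≥ α |||Φᵐˢ|||²`, and since `H ^ p * (1 + H ^ (1 - p)) ≤ 2H` for
`p = (m + 1) / 2 ≥ 1`, the corrector term `a(Φᵐˢ, QΦ_H)` costs at most `2CH |||Φᵐˢ|||²`; this is
the first bound, and dividing by `|||Φ_H|||_H ≤ C |||Φᵐˢ|||` gives the second while `2CH ≤ α`.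
For larger `H` the factor `H ^ ((1 - m) / 2)` is at most `K = (α / 2C) ^ ((1 - m) / 2)`, so
Cauchy–Schwarz for the positive semidefinite form `a` bounds `a(Φᵐˢ, Φ_H)` below by
`-|β| C K |||Φᵐˢ||| |||Φ_H|||_H`, and a large enough `C₂` makes the claimed lower bound smaller.
-/

namespace LinearMap.BilinForm

variable {V : Type*} [AddCommGroup V] [Module ℝ V] (a : LinearMap.BilinForm ℝ V)

theorem abs_apply_le_of_apply_self_le (hsymm : ∀ u v, a u v = a v u) (hpsd : ∀ v, 0 ≤ a v v)
    {n : V → ℝ} (hn : ∀ v, 0 ≤ n v) {β : ℝ} (hdiag : ∀ v, a v v ≤ β * n v * n v) (u v : V) :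
    |a u v| ≤ β * n u * n v := by
  have hcs : a u v ^ 2 ≤ a u u * a v v := by
    simpa only [sq, ← hsymm u v] using a.apply_mul_apply_le_of_forall_zero_le hpsd u v
  have hβ : 0 ≤ β * n u * n v := by
    rcases (hn u).eq_or_lt with hu | hu
    · simp [← hu]
    have : 0 ≤ β :=
      nonneg_of_mul_nonneg_left (nonneg_of_mul_nonneg_left ((hpsd u).trans (hdiag u)) hu) hu
    have := hn v
    positivity
  refine abs_le_of_sq_le_sq ?_ hβ
  calc a u v ^ 2 ≤ a u u * a v v := hcs
    _ ≤ (β * n u * n u) * (β * n v * n v) :=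
      mul_le_mul (hdiag u) (hdiag v) (hpsd v) ((hpsd u).trans (hdiag u))
    _ = (β * n u * n v) ^ 2 := by ring

theorem sub_mul_sq_le_apply_add_left {n : V → ℝ} {α ε : ℝ} {u q : V}
    (hcoer : α * n (u + q) ^ 2 ≤ a (u + q) (u + q)) (hq : |a (u + q) q| ≤ ε * n (u + q) ^ 2) :
    (α - ε) * n (u + q) ^ 2 ≤ a (u + q) u := by
  have hsplit : a (u + q) (u + q) = a (u + q) u + a (u + q) q := map_add _ u q
  linarith [(abs_le.mp hq).2]

end LinearMap.BilinForm

theorem Real.rpow_mul_one_add_rpow_one_sub_le {H p : ℝ} (hH : 0 < H) (hH1 : H ≤ 1) (hp : 1 ≤ p) :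
    H ^ p * (1 + H ^ (1 - p)) ≤ 2 * H := by
  have hHp : H ^ p ≤ H := by
    simpa using Real.rpow_le_rpow_of_exponent_ge hH hH1 hp
  calc H ^ p * (1 + H ^ (1 - p)) = H ^ p + H := by
        rw [mul_add, mul_one, ← Real.rpow_add hH, add_sub_cancel, Real.rpow_one]
    _ ≤ 2 * H := by linarith

-- The constant is chosen so that the coefficient is at most `-B` as soon as `α < 2 * C * H`.
theorem inv_mul_sub_mul_mul_le {α C B H x y A : ℝ} (hα : 0 < α) (hC : 0 < C) (hB : 0 ≤ B)
    (hH : 0 ≤ H) (hx : 0 ≤ x) (hy : 0 ≤ y) (hyx : y ≤ C * x)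
    (hsmall : (α - 2 * C * H) * x ^ 2 ≤ A) (hlarge : α < 2 * C * H → -(B * (x * y)) ≤ A) :
    C⁻¹ * (α - 2 * C * (1 + C * B / α) * H) * (x * y) ≤ A := by
  have hxy : 0 ≤ x * y := mul_nonneg hx hy
  by_cases hHα : α < 2 * C * H
  · refine le_trans (mul_le_mul_of_nonneg_right ?_ hxy |>.trans_eq (neg_mul _ _)) (hlarge hHα)
    rw [inv_mul_le_iff₀ hC]
    have : α * (C * B / α) = C * B := by field_simp
    nlinarith [mul_le_mul_of_nonneg_right hHα.le (by positivity : 0 ≤ C * B / α)]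
  · replace hHα := not_lt.mp hHα
    have hC₂ : 2 * C * H ≤ 2 * C * (1 + C * B / α) * H := by
      have : 0 ≤ C * B / α := by positivity
      nlinarith [mul_nonneg (mul_nonneg hC.le this) hH]
    calc C⁻¹ * (α - 2 * C * (1 + C * B / α) * H) * (x * y)
        ≤ C⁻¹ * (α - 2 * C * H) * (x * y) := by gcongr
      _ ≤ C⁻¹ * (α - 2 * C * H) * (x * (C * x)) := by gcongr
      _ = (α - 2 * C * H) * x ^ 2 := by field_simp
      _ ≤ A := hsmall

theorem stmt12 {V : Type*} [AddCommGroup V] [Module ℝ V]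
    (a : V →ₗ[ℝ] V →ₗ[ℝ] ℝ) (hsymm : ∀ u v, a u v = a v u)
    (n nH : V → ℝ) (α β C m : ℝ)
    (hα : 0 < α) (hC : 0 < C) (hm : 1 < m)
    (hnnn : ∀ v, 0 ≤ n v) (hnHnn : ∀ v, 0 ≤ nH v)
    (hcoer : ∀ v, α * (n v) ^ 2 ≤ a v v)
    (hcont : ∀ u v, a u v ≤ β * n u * n v) :
    ∃ C' C₁ C₂ : ℝ, 0 < C' ∧ 0 < C₁ ∧ 0 < C₂ ∧
      ∀ H : ℝ, 0 < H → H < 1 →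
      ∀ ΦH QΦH : V,
        n ΦH ≤ C * H ^ ((1 - m) / 2) * nH ΦH →
        nH ΦH ≤ C * n (ΦH + QΦH) →
        |a (ΦH + QΦH) QΦH| ≤
          C * H ^ ((m + 1) / 2) * (1 + H ^ ((1 - m) / 2)) * (n (ΦH + QΦH)) ^ 2 →
        (α - C' * H) * (n (ΦH + QΦH)) ^ 2 ≤ a (ΦH + QΦH) ΦH ∧
        C₁ * (α - C₂ * H) * n (ΦH + QΦH) * nH ΦH ≤ a (ΦH + QΦH) ΦH := by
  have hpsd v : 0 ≤ a v v := (by positivity : 0 ≤ α * n v ^ 2).trans (hcoer v)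
  have hbound :=
    LinearMap.BilinForm.abs_apply_le_of_apply_self_le a hsymm hpsd hnnn fun v ↦ hcont v v
  set K := (α / (2 * C)) ^ ((1 - m) / 2)
  set B := |β| * C * K
  have hB : 0 ≤ B := by positivity
  refine ⟨2 * C, C⁻¹, 2 * C * (1 + C * B / α), by positivity, by positivity, by positivity, ?_⟩
  intro H hH hH1 ΦH QΦH hΦH hnH hQ
  have hQ' : |a (ΦH + QΦH) QΦH| ≤ 2 * C * H * n (ΦH + QΦH) ^ 2 := by
    have := Real.rpow_mul_one_add_rpow_one_sub_le (p := (m + 1) / 2) hH hH1.le (by linarith)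
    rw [show 1 - (m + 1) / 2 = (1 - m) / 2 by ring] at this
    calc _ ≤ C * (H ^ ((m + 1) / 2) * (1 + H ^ ((1 - m) / 2))) * n (ΦH + QΦH) ^ 2 := by
          rwa [← mul_assoc C]
      _ ≤ C * (2 * H) * n (ΦH + QΦH) ^ 2 := by gcongr
      _ = 2 * C * H * n (ΦH + QΦH) ^ 2 := by ring
  have hsmall := LinearMap.BilinForm.sub_mul_sq_le_apply_add_left a (hcoer _) hQ'
  refine ⟨hsmall, ?_⟩
  have hlarge (hHα : α < 2 * C * H) : -(B * (n (ΦH + QΦH) * nH ΦH)) ≤ a (ΦH + QΦH) ΦH := by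
    have hK : H ^ ((1 - m) / 2) ≤ K :=
      Real.rpow_le_rpow_of_nonpos (by positivity) ((div_lt_iff₀' (by positivity)).mpr hHα).le
        (by linarith)
    have hnΦH : n ΦH ≤ C * K * nH ΦH := hΦH.trans (by gcongr; exact hnHnn ΦH)
    have := hnnn (ΦH + QΦH)
    calc -(B * (n (ΦH + QΦH) * nH ΦH)) = -(|β| * n (ΦH + QΦH) * (C * K * nH ΦH)) := by ring
      _ ≤ -(|β| * n (ΦH + QΦH) * n ΦH) := by gcongr
      _ ≤ -(β * n (ΦH + QΦH) * n ΦH) := by grw [← le_abs_self β]; exact hnnn ΦH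
      _ ≤ a (ΦH + QΦH) ΦH := neg_le_of_abs_le (hbound _ _)
  simpa only [mul_assoc] using
    inv_mul_sub_mul_mul_le hα hC hB hH.le (hnnn _) (hnHnn _) hnH hsmall hlarge
end
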